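/- If both d(t) and h(t) are formal power series with nonnegative coefficients whose coefficient sequences are Pólya frequency sequences (and h(0)=0), then the Riordan array R(d(t), h(t)) is totally positive. -/

import Mathlib

open PowerSeries

noncomputable section

/-- An infinite real matrix is totally positive if every finite minor
(with strictly increasing row and column indices) is nonnegative. -/
def TotallyPos (M : ℕ → ℕ → ℝ) : Prop :=
  ∀ (k : ℕ) (r c : Fin k → ℕ), StrictMono r → StrictMono c →
    0 ≤ (Matrix.of fun i j => M (r i) (c j)).det

/-- The Riordan array R(d(t), h(t)): entry (n,k) is the coefficient of t^n in d * h^k. -/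
def riordan (d h : PowerSeries ℝ) (n k : ℕ) : ℝ :=
  PowerSeries.coeff (R := ℝ) n (d * h ^ k)

/-- The lower triangular Toeplitz matrix of a sequence. -/
def toeplitz (a : ℕ → ℝ) (i j : ℕ) : ℝ :=
  if j ≤ i then a (i - j) else 0

/-- The Hessenberg matrix: first column (d₀,d₁,…), and entry (i,j) = h_{i-j+1} for j ≥ 1. -/
def hess (d h : ℕ → ℝ) (i j : ℕ) : ℝ :=
  if j = 0 then d i else if j ≤ i + 1 then h (i + 1 - j) else 0

/-!
Multiplying a power series by `d` is multiplying its coefficient vector by the lower triangular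
Toeplitz matrix `T_d`, so `R(d, h) = T_d · R(1, h)`. Column `0` of `R(1, h)` is the unit vector
`e₀`, and column `k + 1` is `T_h` applied to column `k`; so `R(1, h) = [e₀ | T_h · R(1, h)]`.
Total positivity survives left multiplication by a totally positive lower triangular matrix
(Cauchy–Binet: each minor of the product is a sum of products of minors), and prepending `e₀`
(Laplace expansion along the first column). Induction on the number of columns then shows that
`R(1, h)` is totally positive, hence so is `R(d, h)`.
-/

open Finset

section CauchyBinet

variable {R : Type*} [CommRing R] {k n : ℕ}

theorem Matrix.det_mul_eq_sum_prod_mul_det_submatrix (A : Matrix (Fin k) (Fin n) R)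
    (B : Matrix (Fin n) (Fin k) R) :
    (A * B).det = ∑ f : Fin k → Fin n, (∏ i, A i (f i)) * (B.submatrix f id).det := by
  have hrows : A * B = Matrix.of fun i => ∑ m, A i m • B m := by
    ext i j
    simp [Matrix.mul_apply, Finset.sum_apply]
  rw [hrows]
  exact (Matrix.detRowAlternating.toMultilinearMap.map_sum fun i m => A i m • B m).trans
    (sum_congr rfl fun f _ => Matrix.det_mul_column (fun i => A i (f i)) (B.submatrix f id))

theorem Tuple.sort_comp_perm_of_strictMono {α : Type*} [LinearOrder α] {g : Fin k → α}
    (hg : StrictMono g) (σ : Equiv.Perm (Fin k)) : Tuple.sort (g ∘ σ) = σ⁻¹ :=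
  (Tuple.eq_sort_iff.2 ⟨by simpa [Function.comp_assoc] using hg.monotone,
    fun _ _ hij h => absurd (hg.injective (by simpa using h)) (by simpa using hij.ne)⟩).symm

theorem Matrix.det_submatrix_mul_det_submatrix_eq_sum_perm (A : Matrix (Fin k) (Fin n) R)
    (B : Matrix (Fin n) (Fin k) R) (g : Fin k → Fin n) :
    (A.submatrix id g).det * (B.submatrix g id).det
      = ∑ σ : Equiv.Perm (Fin k), (∏ i, A i (g (σ i))) * (B.submatrix (g ∘ σ) id).det := by
  rw [← Matrix.det_transpose (A.submatrix id g), Matrix.det_apply', sum_mul]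
  refine sum_congr rfl fun σ _ => ?_
  have hperm : B.submatrix (g ∘ σ) id = (B.submatrix g id).submatrix σ id := rfl
  rw [hperm, Matrix.det_permute]
  simp only [Matrix.transpose_apply, Matrix.submatrix_apply, id_eq]
  ring

open scoped Classical in
/-- **Cauchy–Binet formula**. -/
theorem Matrix.det_mul_eq_sum_strictMono (A : Matrix (Fin k) (Fin n) R)
    (B : Matrix (Fin n) (Fin k) R) :
    (A * B).det = ∑ f ∈ univ.filter (StrictMono : (Fin k → Fin n) → Prop),
      (A.submatrix id f).det * (B.submatrix f id).det := by
  set F : (Fin k → Fin n) → R := fun f => (∏ i, A i (f i)) * (B.submatrix f id).det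
  have hnoninj : ∑ f ∈ univ.filter (fun f : Fin k → Fin n => ¬ f.Injective), F f = 0 := by
    refine sum_eq_zero fun f hf => ?_
    obtain ⟨i, j, hij, hne⟩ : ∃ i j, f i = f j ∧ i ≠ j := by
      simpa [Function.Injective] using (mem_filter.1 hf).2
    have hrow : B.submatrix f id i = B.submatrix f id j := by ext; simp [hij]
    simp only [F, Matrix.det_zero_of_row_eq hne hrow, mul_zero]
  have hinj : ∑ f ∈ univ.filter (fun f : Fin k → Fin n => f.Injective), F f
      = ∑ p ∈ univ.filter (StrictMono : (Fin k → Fin n) → Prop) ×ˢ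
        (univ : Finset (Equiv.Perm (Fin k))), F (p.1 ∘ p.2) := by
    refine sum_nbij' (fun f => (f ∘ Tuple.sort f, ((Tuple.sort f)⁻¹ : Equiv.Perm (Fin k))))
      (fun p => p.1 ∘ p.2) ?_ ?_ ?_ ?_ ?_
    · intro f hf
      simp only [mem_filter, mem_product, mem_univ, true_and, and_true] at hf ⊢
      exact (Tuple.monotone_sort f).strictMono_of_injective (hf.comp (Equiv.injective _))
    · intro p hp
      simp only [mem_filter, mem_product, mem_univ, true_and, and_true] at hp ⊢
      exact hp.injective.comp (Equiv.injective _)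
    · intro f _
      funext x
      simp
    · intro p hp
      simp only [mem_filter, mem_product, mem_univ, true_and, and_true] at hp
      rw [Tuple.sort_comp_perm_of_strictMono hp]
      ext x <;> simp
    · intro f _
      simp only [F]
      congr <;> funext x <;> simp
  rw [Matrix.det_mul_eq_sum_prod_mul_det_submatrix, ← sum_filter_add_sum_filter_not univ
    (fun f : Fin k → Fin n => f.Injective), hnoninj, add_zero, hinj, sum_product]
  exact sum_congr rfl fun g _ => (Matrix.det_submatrix_mul_det_submatrix_eq_sum_perm A B g).symm

end CauchyBinet

section TotalPositivity

theorem StrictMono.sub_one {ι : Type*} [Preorder ι] {c : ι → ℕ} (hc : StrictMono c)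
    (hc0 : ∀ j, c j ≠ 0) : StrictMono fun j => c j - 1 := fun a b hab => by
  have := hc hab
  have := hc0 a
  dsimp only
  omega

theorem totallyPos_zero : TotallyPos 0 := by
  intro k r c _ _
  cases k with
  | zero => simp
  | succ k => exact (Matrix.det_eq_zero_of_column_eq_zero 0 fun _ => rfl).ge

/-- The product `A * B` of infinite matrices when `A` is lower triangular. -/
def lowerMul (A B : ℕ → ℕ → ℝ) (i j : ℕ) : ℝ :=
  ∑ m ∈ range (i + 1), A i m * B m j

theorem totallyPos_lowerMul {A B : ℕ → ℕ → ℝ} (hA : TotallyPos A) (hB : TotallyPos B)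
    (hlow : ∀ i j, i < j → A i j = 0) : TotallyPos (lowerMul A B) := by
  intro k r c hr hc
  set n := ∑ i, r i + 1
  have hrn : ∀ i, r i < n := fun i =>
    Nat.lt_succ_of_le (single_le_sum (fun _ _ => Nat.zero_le _) (mem_univ i))
  have hfactor : (Matrix.of fun i j => lowerMul A B (r i) (c j))
      = (Matrix.of fun i (m : Fin n) => A (r i) m) * Matrix.of fun (m : Fin n) j => B m (c j) := by
    ext i j
    rw [Matrix.of_apply, Matrix.mul_apply, lowerMul]
    simp only [Matrix.of_apply]
    rw [Fin.sum_univ_eq_sum_range (fun m => A (r i) m * B m (c j))]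
    refine sum_subset (range_subset_range.2 (hrn i)) fun m _ hm => ?_
    rw [hlow _ _ (by simpa using hm), zero_mul]
  rw [hfactor, Matrix.det_mul_eq_sum_strictMono]
  refine sum_nonneg fun f hf => mul_nonneg ?_ ?_
  · exact hA k r (fun i => f i) hr (Fin.val_strictMono.comp (mem_filter.1 hf).2)
  · exact hB k (fun i => f i) c (Fin.val_strictMono.comp (mem_filter.1 hf).2) hc

def consUnitCol (M : ℕ → ℕ → ℝ) (i j : ℕ) : ℝ :=
  if j = 0 then (if i = 0 then 1 else 0) else M i (j - 1)

theorem totallyPos_consUnitCol {M : ℕ → ℕ → ℝ} (hM : TotallyPos M) :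
    TotallyPos (consUnitCol M) := by
  intro k r c hr hc
  cases k with
  | zero => simp
  | succ k =>
  have hc_succ : ∀ j : Fin k, c j.succ ≠ 0 := fun j => Nat.ne_zero_of_lt (hc j.succ_pos)
  by_cases hc0 : c 0 = 0
  · by_cases hr0 : r 0 = 0
    · have hr_ne : ∀ i, i ≠ 0 → r i ≠ 0 := fun i hi =>
        Nat.ne_zero_of_lt (hr (Fin.pos_of_ne_zero hi))
      rw [Matrix.det_succ_column_zero, sum_eq_single 0]
      · simp only [Fin.val_zero, pow_zero, one_mul, Matrix.of_apply, consUnitCol, hc0, hr0,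
          if_true, Fin.succAbove_zero]
        convert hM k (fun i => r i.succ) (fun j => c j.succ - 1) (hr.comp Fin.strictMono_succ)
          ((hc.comp Fin.strictMono_succ).sub_one hc_succ) using 2
        ext i j
        simp [hc_succ]
      · intro i _ hi
        simp [consUnitCol, hc0, hr_ne i hi]
      · simp
    · refine (Matrix.det_eq_zero_of_column_eq_zero 0 fun i => ?_).ge
      have : r i ≠ 0 := by
        have := hr.monotone (Fin.zero_le i)
        omega
      simp [consUnitCol, hc0, this]
  · have hc_ne : ∀ j, c j ≠ 0 := fun j => by
      have := hc.monotone (Fin.zero_le j)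
      omega
    simpa [consUnitCol, hc_ne] using hM (k + 1) r (fun j => c j - 1) hr (hc.sub_one hc_ne)

def truncCols (N : ℕ) (M : ℕ → ℕ → ℝ) (i j : ℕ) : ℝ :=
  if j < N then M i j else 0

theorem totallyPos_of_forall_truncCols {M : ℕ → ℕ → ℝ}
    (h : ∀ N, TotallyPos (truncCols N M)) : TotallyPos M := by
  intro k r c hr hc
  have hcN : ∀ j, c j < ∑ j, c j + 1 := fun j =>
    Nat.lt_succ_of_le (single_le_sum (fun _ _ => Nat.zero_le _) (mem_univ j))
  simpa [truncCols, hcN] using h (∑ j, c j + 1) k r c hr hc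

end TotalPositivity

theorem toeplitz_eq_zero_of_lt (a : ℕ → ℝ) {i j : ℕ} (hij : i < j) : toeplitz a i j = 0 :=
  if_neg hij.not_ge

theorem coeff_mul_eq_sum_toeplitz (p q : PowerSeries ℝ) (n : ℕ) :
    coeff n (p * q) = ∑ m ∈ range (n + 1), toeplitz (fun l => coeff l p) n m * coeff m q := by
  rw [mul_comm, coeff_mul, Nat.sum_antidiagonal_eq_sum_range_succ fun i j => coeff i q * coeff j p]
  refine sum_congr rfl fun m hm => ?_
  rw [toeplitz, if_pos (Nat.lt_succ_iff.1 (mem_range.1 hm)), mul_comm]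

theorem riordan_eq_lowerMul (d h : PowerSeries ℝ) :
    riordan d h = lowerMul (toeplitz fun n => coeff n d) (riordan 1 h) := by
  ext n k
  simp only [riordan, lowerMul, one_mul, coeff_mul_eq_sum_toeplitz]

theorem truncCols_succ_riordan_one (h : PowerSeries ℝ) (N : ℕ) :
    truncCols (N + 1) (riordan 1 h)
      = consUnitCol (lowerMul (toeplitz fun n => coeff n h) (truncCols N (riordan 1 h))) := by
  ext i j
  cases j with
  | zero => simp [truncCols, consUnitCol, riordan, coeff_one]
  | succ j =>
    by_cases hj : j < N
    · simp [truncCols, consUnitCol, lowerMul, riordan, hj, pow_succ', coeff_mul_eq_sum_toeplitz]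
    · simp [truncCols, consUnitCol, lowerMul, hj]

theorem totallyPos_riordan_one {h : PowerSeries ℝ}
    (hh : TotallyPos (toeplitz fun n => coeff n h)) : TotallyPos (riordan 1 h) := by
  refine totallyPos_of_forall_truncCols fun N => ?_
  induction N with
  | zero =>
    convert totallyPos_zero
    ext i j
    simp [truncCols]
  | succ N ih =>
    rw [truncCols_succ_riordan_one]
    exact totallyPos_consUnitCol (totallyPos_lowerMul hh ih fun _ _ => toeplitz_eq_zero_of_lt _)

theorem stmt10_general (d h : PowerSeries ℝ)
    (hdPF : TotallyPos (toeplitz (fun n => coeff (R := ℝ) n d)))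
    (hhPF : TotallyPos (toeplitz (fun n => coeff (R := ℝ) n h))) :
    TotallyPos (riordan d h) := by
  rw [riordan_eq_lowerMul]
  exact totallyPos_lowerMul hdPF (totallyPos_riordan_one hhPF) fun _ _ => toeplitz_eq_zero_of_lt _

theorem stmt10 (d h : PowerSeries ℝ) (h0 : constantCoeff (R := ℝ) h = 0)
    (hd0 : ∀ n, 0 ≤ coeff (R := ℝ) n d) (hh0 : ∀ n, 0 ≤ coeff (R := ℝ) n h)
    (hdPF : TotallyPos (toeplitz (fun n => coeff (R := ℝ) n d)))
    (hhPF : TotallyPos (toeplitz (fun n => coeff (R := ℝ) n h))) :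
    TotallyPos (riordan d h) :=
  stmt10_general d h hdPF hhPF

end
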